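/- arXiv:1410.0060 — 7 statements merged into one kernel-verified Lean document; each statement's English description precedes it below -/
import Mathlib

section
/- Let f : E → B be a uniformly expansive, homogeneous map between metric spaces. Assume B has straight finite decomposition complexity, and assume there exists b₀ ∈ B such that for every r > 0 the metric subspace f⁻¹(B_r(b₀)) of E has straight finite decomposition complexity, where B_r(b₀) denotes the closed ball of radius r centered at b₀. Then E has straight finite decomposition complexity. -/
universe u

open Set

/-- Two subsets of a metric space are `r`-disjoint if all pairs of points, one from each,
are at distance greater than `r`. -/
def RDisjoint {X : Type u} [MetricSpace X] (r : ℝ) (A B : Set X) : Prop :=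
  ∀ a ∈ A, ∀ b ∈ B, r < dist a b

/-- A metric family (a set of subsets of `X`) is uniformly bounded if the diameters of its
members are bounded by a common constant. -/
def UniformlyBounded {X : Type u} [MetricSpace X] (𝒵 : Set (Set X)) : Prop :=
  ∃ C : ℝ, ∀ Z ∈ 𝒵, ∀ x ∈ Z, ∀ y ∈ Z, dist x y ≤ C

/-- A `(k, r)`-decomposition of a subset `Z` of `X` over a metric family `𝒴`:
`Z = Z₀ ∪ ⋯ ∪ Z_{k-1}` where each `Zᵢ` is a union of a collection of pairwise
`r`-disjoint members of `𝒴`. -/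
def IsDecompOver {X : Type u} [MetricSpace X] (k : ℕ) (r : ℝ) (Z : Set X)
    (𝒴 : Set (Set X)) : Prop :=
  ∃ Zs : Fin k → Set X, Z = ⋃ i, Zs i ∧
    ∀ i, ∃ 𝒞 : Set (Set X), 𝒞 ⊆ 𝒴 ∧ Zs i = ⋃₀ 𝒞 ∧
      ∀ A ∈ 𝒞, ∀ B ∈ 𝒞, A ≠ B → RDisjoint r A B

/-- A metric family `𝒳` is `(k, r)`-decomposable over `𝒴` if every member of `𝒳` admits a
`(k, r)`-decomposition over `𝒴`. -/
def Decomposable {X : Type u} [MetricSpace X] (k : ℕ) (r : ℝ)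
    (𝒳 𝒴 : Set (Set X)) : Prop :=
  ∀ Z ∈ 𝒳, IsDecompOver k r Z 𝒴

/-- A metric family `𝒳` over `X` has straight finite decomposition complexity if for every
strictly increasing sequence `R₁ < R₂ < ⋯` of positive reals there are `n` and families
`𝒳 = 𝒳₀, 𝒳₁, …, 𝒳ₙ` with `𝒳ᵢ` `R_{i+1}`-decomposable over `𝒳_{i+1}` for `i < n` and `𝒳ₙ`
uniformly bounded. -/
def SFDC {X : Type u} [MetricSpace X] (𝒳 : Set (Set X)) : Prop :=
  ∀ R : ℕ → ℝ, (∀ i, 0 < R i) → StrictMono R →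
    ∃ n : ℕ, ∃ Xs : ℕ → Set (Set X), Xs 0 = 𝒳 ∧
      (∀ i < n, Decomposable 2 (R i) (Xs i) (Xs (i + 1))) ∧
      UniformlyBounded (Xs n)

/-- A map between metric spaces is uniformly expansive if it admits a nondecreasing
control function `ρ` with `dist (f x) (f x') ≤ ρ (dist x x')`. -/
def UniformlyExpansive {E B : Type*} [MetricSpace E] [MetricSpace B] (f : E → B) : Prop :=
  ∃ ρ : ℝ → ℝ, Monotone ρ ∧ ∀ x x' : E, dist (f x) (f x') ≤ ρ (dist x x')

/-- A map `f : E → B` between metric spaces is homogeneous if for all `y₁, y₂` in the image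
of `f` there are bijective isometries `φ` of `E` and `ψ` of `B` with `f ∘ φ = ψ ∘ f` and
`ψ y₁ = y₂`. -/
def Homogeneous {E B : Type*} [MetricSpace E] [MetricSpace B] (f : E → B) : Prop :=
  ∀ y₁ ∈ Set.range f, ∀ y₂ ∈ Set.range f, ∃ φ : E ≃ᵢ E, ∃ ψ : B ≃ᵢ B,
    (∀ x : E, f (φ x) = ψ (f x)) ∧ ψ y₁ = y₂

/-- Closure of a metric family under subsets of images by global isometries. -/
def hatF {E : Type u} [MetricSpace E] (𝒴 : Set (Set E)) : Set (Set E) :=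
  {T | ∃ Y ∈ 𝒴, ∃ φ : E ≃ᵢ E, T ⊆ φ '' Y}

theorem hat_decomp {E : Type u} [MetricSpace E] {r : ℝ} {𝒳 𝒴 : Set (Set E)}
    (h : Decomposable 2 r 𝒳 𝒴) : Decomposable 2 r (hatF 𝒳) (hatF 𝒴) := by
  rintro T ⟨Z, hZ, φ, hT⟩
  obtain ⟨Zs, hZeq, hZi⟩ := h Z hZ
  refine ⟨fun j => T ∩ φ '' Zs j, ?_, ?_⟩
  · ext x
    constructor
    · intro hx
      have hx' : x ∈ φ '' Z := hT hx
      rw [hZeq] at hx'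
      obtain ⟨y, hy, rfl⟩ := hx'
      obtain ⟨j, hj⟩ := Set.mem_iUnion.1 hy
      exact Set.mem_iUnion.2 ⟨j, hx, ⟨y, hj, rfl⟩⟩
    · intro hx
      obtain ⟨j, hj⟩ := Set.mem_iUnion.1 hx
      exact hj.1
  · intro j
    obtain ⟨𝒞, h𝒞Y, h𝒞eq, h𝒞dis⟩ := hZi j
    refine ⟨(fun A => T ∩ φ '' A) '' 𝒞, ?_, ?_, ?_⟩
    · rintro _ ⟨A, hA, rfl⟩
      exact ⟨A, h𝒞Y hA, φ, Set.inter_subset_right⟩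
    · show T ∩ ⇑φ '' Zs j = _
      rw [h𝒞eq]
      ext x
      simp only [Set.mem_inter_iff, Set.mem_image, Set.mem_sUnion]
      constructor
      · rintro ⟨hxT, y, ⟨A, hA, hyA⟩, rfl⟩
        exact ⟨_, ⟨A, hA, rfl⟩, hxT, y, hyA, rfl⟩
      · rintro ⟨_, ⟨A, hA, rfl⟩, hxT, y, hyA, rfl⟩
        exact ⟨hxT, y, ⟨A, hA, hyA⟩, rfl⟩
    · rintro _ ⟨A, hA, rfl⟩ _ ⟨A', hA', rfl⟩ hne a ha b hb
      have hAA' : A ≠ A' := by rintro rfl; exact hne rfl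
      obtain ⟨u, hu, rfl⟩ := ha.2
      obtain ⟨v, hv, rfl⟩ := hb.2
      have := h𝒞dis A hA A' hA' hAA' u hu v hv
      simpa [φ.dist_eq] using this

theorem hat_bounded {E : Type u} [MetricSpace E] {𝒴 : Set (Set E)}
    (h : UniformlyBounded 𝒴) : UniformlyBounded (hatF 𝒴) := by
  obtain ⟨C, hC⟩ := h
  refine ⟨C, ?_⟩
  rintro T ⟨Y, hY, φ, hT⟩ x hx y hy
  obtain ⟨u, hu, rfl⟩ := hT hx
  obtain ⟨v, hv, rfl⟩ := hT hy
  rw [φ.dist_eq]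
  exact hC Y hY u hu v hv

theorem decomp_of_mem {X : Type u} [MetricSpace X] {r : ℝ} {𝒳 𝒴 : Set (Set X)}
    (h : ∀ Z ∈ 𝒳, Z ∈ 𝒴) : Decomposable 2 r 𝒳 𝒴 := by
  intro Z hZ
  refine ⟨fun j => if j = 0 then Z else ∅, ?_, fun j => ?_⟩
  · ext x
    simp only [Set.mem_iUnion]
    constructor
    · intro hx; exact ⟨0, by simpa using hx⟩
    · rintro ⟨j, hj⟩
      by_cases hj0 : j = 0
      · simpa [hj0] using hj
      · simp [hj0] at hj
  · by_cases hj : j = 0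
    · refine ⟨{Z}, by simpa using h Z hZ, by simp [hj], ?_⟩
      rintro A rfl B rfl hne
      exact absurd rfl hne
    · exact ⟨∅, by simp, by simp [hj], by simp⟩

/-- Let `f : E → B` be a uniformly expansive homogeneous map of metric
spaces.  If `B` has straight finite decomposition complexity and there is `b₀ ∈ B` such
that for every `r > 0` the subspace `f⁻¹(B_r(b₀))` of `E` (preimage of the closed ball)
has straight finite decomposition complexity, then `E` has straight finite decomposition
complexity. -/
theorem sfdc_homogeneous_fibering {E B : Type u} [MetricSpace E] [MetricSpace B]
    (f : E → B) (hexp : UniformlyExpansive f) (hhom : Homogeneous f)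
    (hB : SFDC ({(Set.univ : Set B)} : Set (Set B)))
    (hfib : ∃ b₀ : B, ∀ r : ℝ, 0 < r →
      SFDC ({f ⁻¹' Metric.closedBall b₀ r} : Set (Set E))) :
    SFDC ({(Set.univ : Set E)} : Set (Set E)) := by
  obtain ⟨ρ, hρmono, hρ⟩ := hexp
  obtain ⟨b₀, hfib⟩ := hfib
  intro R hRpos hRmono
  rcases isEmpty_or_nonempty E with hE | ⟨⟨e₀⟩⟩
  · exact ⟨0, fun _ => {Set.univ}, rfl, by intro i hi; omega,
      ⟨0, by intro Z _ x _; exact (hE.false x).elim⟩⟩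
  -- Step A: decompose B and pull back
  have hR'pos : ∀ i, 0 < max (ρ (R i)) 0 + R i := fun i =>
    add_pos_of_nonneg_of_pos (le_max_right _ _) (hRpos i)
  have hR'mono : StrictMono (fun i => max (ρ (R i)) 0 + R i) := fun i j hij =>
    add_lt_add_of_le_of_lt (max_le_max (hρmono (hRmono hij).le) le_rfl) (hRmono hij)
  obtain ⟨n, Ys, hYs0, hYdec, C, hC⟩ := hB _ hR'pos hR'mono
  set Xs' : ℕ → Set (Set E) := fun i => (f ⁻¹' ·) '' Ys i with hXs'
  have hXdec : ∀ i < n, Decomposable 2 (R i) (Xs' i) (Xs' (i + 1)) := by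
    intro i hi Z' hZ'
    obtain ⟨Z, hZ, rfl⟩ := hZ'
    obtain ⟨Zs, hZeq, hZi⟩ := hYdec i hi Z hZ
    refine ⟨fun j => f ⁻¹' Zs j, ?_, fun j => ?_⟩
    · show f ⁻¹' Z = _
      rw [hZeq, Set.preimage_iUnion]
    obtain ⟨𝒞, h1, h2, h3⟩ := hZi j
    refine ⟨(f ⁻¹' ·) '' 𝒞, Set.image_mono h1, ?_, ?_⟩
    · show f ⁻¹' Zs j = _
      rw [h2, Set.sUnion_image, Set.preimage_sUnion]
    · rintro _ ⟨A, hA, rfl⟩ _ ⟨A', hA', rfl⟩ hne a ha b hb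
      have hAA' : A ≠ A' := fun h => hne (by rw [h])
      have hd := h3 A hA A' hA' hAA' (f a) ha (f b) hb
      by_contra hcon
      push_neg at hcon
      have h4 : dist (f a) (f b) ≤ ρ (R i) := (hρ a b).trans (hρmono hcon)
      have h5 : ρ (R i) ≤ max (ρ (R i)) 0 + R i :=
        (le_max_left _ _).trans (le_add_of_nonneg_right (hRpos i).le)
      linarith
  -- Step B: the fiber family
  set b₁ := f e₀ with hb₁def
  set r₀ : ℝ := max C 0 + dist b₀ b₁ + 1 with hr₀def
  have hr₀ : 0 < r₀ :=
    add_pos_of_nonneg_of_pos (add_nonneg (le_max_right C 0) dist_nonneg) one_pos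
  set F := f ⁻¹' Metric.closedBall b₀ r₀ with hF
  obtain ⟨m, Ws, hWs0, hWdec, hWbd⟩ := hfib r₀ hr₀ (fun j => R (n + 1 + j))
    (fun j => hRpos _) (fun j k hjk => hRmono (by omega))
  have hmem : ∀ Z' ∈ Xs' n, Z' ∈ hatF ({F} : Set (Set E)) := by
    rintro _ ⟨Y, hY, rfl⟩
    rcases (f ⁻¹' Y).eq_empty_or_nonempty with he | ⟨x₀, hx₀⟩
    · refine ⟨F, rfl, IsometryEquiv.refl E, ?_⟩
      show f ⁻¹' Y ⊆ _
      rw [he]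
      exact Set.empty_subset _
    · obtain ⟨φ, ψ, hcomm, hψ⟩ := hhom b₁ ⟨e₀, rfl⟩ (f x₀) ⟨x₀, rfl⟩
      refine ⟨F, rfl, φ, fun x hx => ?_⟩
      refine ⟨φ.symm x, ?_, φ.apply_symm_apply x⟩
      have h1 : f (φ (φ.symm x)) = ψ (f (φ.symm x)) := hcomm _
      rw [φ.apply_symm_apply] at h1
      have h2 : f (φ.symm x) = ψ.symm (f x) := by rw [h1]; simp
      show f (φ.symm x) ∈ Metric.closedBall b₀ r₀
      rw [h2, Metric.mem_closedBall]
      have hb₁ : ψ.symm (f x₀) = b₁ := by rw [← hψ]; simp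
      calc dist (ψ.symm (f x)) b₀
          ≤ dist (ψ.symm (f x)) (ψ.symm (f x₀)) + dist (ψ.symm (f x₀)) b₀ :=
            dist_triangle _ _ _
        _ = dist (f x) (f x₀) + dist b₁ b₀ := by rw [ψ.symm.dist_eq, hb₁]
        _ ≤ C + dist b₀ b₁ := by
            rw [dist_comm b₁]
            exact add_le_add_left (hC Y hY _ hx _ hx₀) _
        _ ≤ r₀ := by
            rw [hr₀def]
            have := le_max_left C (0 : ℝ)
            linarith
  -- Assemble the total chain
  refine ⟨n + 1 + m, fun i => if i ≤ n then Xs' i else hatF (Ws (i - (n + 1))), ?_, ?_, ?_⟩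
  · simp only [Nat.zero_le, if_pos, hXs', hYs0, Set.image_singleton, Set.preimage_univ]
  · intro i hi
    rcases lt_trichotomy i n with h | h | h
    · simp only [if_pos h.le, if_pos (by omega : i + 1 ≤ n)]
      exact hXdec i h
    · subst h
      simp only [if_pos le_rfl, if_neg (by omega : ¬ i + 1 ≤ i)]
      have he0 : i + 1 - (i + 1) = 0 := by omega
      rw [he0, hWs0]
      exact decomp_of_mem hmem
    · have h1 : ¬ i ≤ n := by omega
      have h2 : ¬ i + 1 ≤ n := by omega
      simp only [if_neg h1, if_neg h2]
      have hj : i - (n + 1) < m := by omega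
      have he1 : i + 1 - (n + 1) = (i - (n + 1)) + 1 := by omega
      rw [he1]
      have hd := hat_decomp (hWdec (i - (n + 1)) hj)
      have heq : n + 1 + (i - (n + 1)) = i := by omega
      rwa [heq] at hd
  · have h1 : ¬ n + 1 + m ≤ n := by omega
    simp only [if_neg h1]
    have he2 : n + 1 + m - (n + 1) = m := by omega
    rw [he2]
    exact hat_bounded hWbd
end

section
/- Let a countable group Γ act by isometries on metric spaces E and B, with the action on B transitive. Let f : E → B be a Γ-equivariant contraction, i.e., d(f(x), f(x')) ≤ d(x,x') for all x, x' ∈ E. Assume B has straight finite decomposition complexity and that for every bounded subset D ⊆ B the metric subspace f⁻¹(D) of E has straight finite decomposition complexity. Then E has straight finite decomposition complexity. -/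
universe u

open Set

open Pointwise

/-- (Transitive Fibering Theorem for sFDC.)  Let a countable group `Γ`
act by isometries on metric spaces `E` and `B`, transitively on `B`, and let `f : E → B`
be a `Γ`-equivariant contraction.  If `B` has straight finite decomposition complexity and
`f⁻¹(D)` has straight finite decomposition complexity for every bounded `D ⊆ B`, then `E`
has straight finite decomposition complexity. -/
theorem sfdc_transitive_fibering {Γ E B : Type u} [Group Γ] [Countable Γ]
    [MetricSpace E] [MetricSpace B] [MulAction Γ E] [MulAction Γ B]
    (hE : ∀ γ : Γ, Isometry fun x : E => γ • x)
    (hB : ∀ γ : Γ, Isometry fun b : B => γ • b)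
    (htrans : ∀ b₁ b₂ : B, ∃ γ : Γ, γ • b₁ = b₂)
    (f : E → B)
    (hcontr : ∀ x x' : E, dist (f x) (f x') ≤ dist x x')
    (hequiv : ∀ (γ : Γ) (x : E), f (γ • x) = γ • f x)
    (hBsfdc : SFDC ({(Set.univ : Set B)} : Set (Set B)))
    (hfib : ∀ D : Set B, Bornology.IsBounded D → SFDC ({f ⁻¹' D} : Set (Set E))) :
    SFDC ({(Set.univ : Set E)} : Set (Set E)) := by
  intro R hRpos hRmono
  by_cases hBne : Nonempty B
  · obtain ⟨b₀⟩ := hBne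
    obtain ⟨n, Ys, hYs0, hYstep, C, hC⟩ := hBsfdc R hRpos hRmono
    obtain ⟨m, Zs, hZs0, hZstep, C', hC'⟩ :=
      hfib (Metric.closedBall b₀ C) Metric.isBounded_closedBall
        (fun j => R (n + 1 + j)) (fun j => hRpos _)
        (fun a b hab => hRmono (by omega))
    classical
    set Xs : ℕ → Set (Set E) := fun i =>
      if i ≤ n then (fun Y => f ⁻¹' Y) '' Ys i
      else {S | ∃ γ : Γ, ∃ W ∈ Zs (i - (n + 1)), S ⊆ γ • W} with hXsdef
    have hXle : ∀ i, i ≤ n → Xs i = (fun Y => f ⁻¹' Y) '' Ys i := fun i h => if_pos h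
    have hXgt : ∀ j, Xs (n + 1 + j) = {S | ∃ γ : Γ, ∃ W ∈ Zs j, S ⊆ γ • W} := by
      intro j
      have h1 : ¬ (n + 1 + j ≤ n) := by omega
      have h2 : n + 1 + j - (n + 1) = j := by omega
      simp only [Xs, if_neg h1, h2]
    have hdE : ∀ (γ : Γ) (a b : E), dist (γ • a) (γ • b) = dist a b := fun γ a b =>
      (hE γ).dist_eq a b
    have hdB : ∀ (γ : Γ) (a b : B), dist (γ • a) (γ • b) = dist a b := fun γ a b =>
      (hB γ).dist_eq a b
    refine ⟨n + 1 + m, Xs, ?_, ?_, ?_⟩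
    · rw [hXle 0 (Nat.zero_le n), hYs0]
      simp
    · intro i hi
      rcases lt_trichotomy i n with hlt | heq | hgt
      · -- pullback step
        rw [hXle i hlt.le, hXle (i+1) hlt]
        rintro _ ⟨Y, hY, rfl⟩
        obtain ⟨Yp, hYu, hYi⟩ := hYstep i hlt Y hY
        refine ⟨fun j => f ⁻¹' Yp j, ?_, ?_⟩
        · show f ⁻¹' Y = ⋃ j, f ⁻¹' Yp j
          rw [hYu]; exact preimage_iUnion
        intro j
        obtain ⟨𝒞, h𝒞sub, h𝒞eq, h𝒞disj⟩ := hYi j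
        refine ⟨(fun A => f ⁻¹' A) '' 𝒞, image_mono h𝒞sub, ?_, ?_⟩
        · show f ⁻¹' Yp j = ⋃₀ ((fun A => f ⁻¹' A) '' 𝒞)
          simp only [h𝒞eq, sUnion_image, preimage_sUnion]
        · rintro _ ⟨A, hA, rfl⟩ _ ⟨A', hA', rfl⟩ hne a ha b hb
          have hAne : A ≠ A' := fun h => hne (by rw [h])
          exact lt_of_lt_of_le (h𝒞disj A hA A' hA' hAne (f a) ha (f b) hb) (hcontr a b)
      · -- transition step
        subst heq
        rw [hXle i le_rfl]
        have h1 : Xs (i + 1) = {S | ∃ γ : Γ, ∃ W ∈ Zs 0, S ⊆ γ • W} := hXgt 0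
        rintro _ ⟨Y, hY, rfl⟩
        have hmem : f ⁻¹' Y ∈ Xs (i + 1) := by
          rw [h1, hZs0]
          by_cases hYne : Y.Nonempty
          · obtain ⟨z, hz⟩ := hYne
            obtain ⟨γ, hγ⟩ := htrans b₀ z
            refine ⟨γ, f ⁻¹' Metric.closedBall b₀ C, rfl, ?_⟩
            intro x hx
            rw [mem_smul_set_iff_inv_smul_mem]
            show f (γ⁻¹ • x) ∈ Metric.closedBall b₀ C
            rw [hequiv, Metric.mem_closedBall]
            have hd : dist (γ⁻¹ • f x) b₀ = dist (f x) z := by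
              rw [← hdB γ (γ⁻¹ • f x) b₀, smul_inv_smul, hγ]
            rw [hd]
            exact hC Y hY (f x) hx z hz
          · rw [Set.not_nonempty_iff_eq_empty] at hYne
            exact ⟨1, f ⁻¹' Metric.closedBall b₀ C, rfl, by simp [hYne]⟩
        refine ⟨fun _ => f ⁻¹' Y, (iUnion_const _).symm, fun j =>
          ⟨{f ⁻¹' Y}, singleton_subset_iff.2 hmem, (sUnion_singleton _).symm, ?_⟩⟩
        intro A hA B' hB' hne
        rw [mem_singleton_iff] at hA hB'
        exact absurd (hA.trans hB'.symm) hne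
      · -- fibre step
        obtain ⟨j, rfl⟩ : ∃ j, i = n + 1 + j := ⟨i - (n + 1), by omega⟩
        have hjm : j < m := by omega
        have h2 : Xs (n + 1 + j + 1) = {S | ∃ γ : Γ, ∃ W ∈ Zs (j + 1), S ⊆ γ • W} :=
          hXgt (j + 1)
        rw [hXgt j]
        rintro Z ⟨γ, W, hW, hsub⟩
        obtain ⟨Wp, hWu, hWi⟩ := hZstep j hjm W hW
        refine ⟨fun i => (γ • Wp i) ∩ Z, ?_, ?_⟩
        · show Z = ⋃ i, (γ • Wp i) ∩ Z
          apply Subset.antisymm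
          · intro x hx
            have hx' : x ∈ γ • W := hsub hx
            rw [hWu, smul_set_iUnion] at hx'
            obtain ⟨i, hi'⟩ := mem_iUnion.1 hx'
            exact mem_iUnion.2 ⟨i, hi', hx⟩
          · exact iUnion_subset fun i => inter_subset_right
        · intro i
          obtain ⟨𝒞, h𝒞sub, h𝒞eq, h𝒞disj⟩ := hWi i
          refine ⟨(fun A => (γ • A) ∩ Z) '' 𝒞, ?_, ?_, ?_⟩
          · rintro _ ⟨A, hA, rfl⟩
            rw [h2]
            exact ⟨γ, A, h𝒞sub hA, inter_subset_left⟩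
          · show (γ • Wp i) ∩ Z = ⋃₀ ((fun A => (γ • A) ∩ Z) '' 𝒞)
            rw [sUnion_image, h𝒞eq]
            ext x
            simp only [mem_inter_iff, mem_iUnion, mem_smul_set_iff_inv_smul_mem,
              mem_sUnion, exists_prop]
            tauto
          · rintro _ ⟨A, hA, rfl⟩ _ ⟨A', hA', rfl⟩ hne a ⟨haA, _⟩ b ⟨hbA', _⟩
            have hAne : A ≠ A' := fun h => hne (by rw [h])
            obtain ⟨a', ha', rfl⟩ := haA
            obtain ⟨b', hb', rfl⟩ := hbA'
            rw [hdE]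
            exact h𝒞disj A hA A' hA' hAne a' ha' b' hb'
    · rw [hXgt m]
      refine ⟨C', ?_⟩
      rintro S ⟨γ, W, hW, hsub⟩ x hx y hy
      obtain ⟨a, ha, rfl⟩ := hsub hx
      obtain ⟨b, hb, rfl⟩ := hsub hy
      rw [hdE]
      exact hC' W hW a ha b hb
  · refine ⟨0, fun _ => {(Set.univ : Set E)}, rfl, fun i hi => absurd hi (Nat.not_lt_zero i),
      ⟨0, ?_⟩⟩
    rintro Z hZ x hx
    exact absurd ⟨f x⟩ hBne
end

section
/- Every metric family over a metric space X that has weak finite decomposition complexity also has straight finite decomposition complexity. -/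
universe u

open Set

/-- The collection of metric families over `X` with weak finite decomposition complexity:
the smallest collection of metric families containing all uniformly bounded families and
stable under weak decomposition (here stated in Skolemized form: for some `k`, a choice
`𝒴 r` of a family in the collection over which `𝒳` is `(k, r)`-decomposable, for every
`r > 0`). -/
inductive WFDC {X : Type u} [MetricSpace X] : Set (Set X) → Prop where
  | ofBounded {𝒳 : Set (Set X)} : UniformlyBounded 𝒳 → WFDC 𝒳
  | ofDecomp {𝒳 : Set (Set X)} (k : ℕ) (𝒴 : ℝ → Set (Set X)) :
      (∀ r : ℝ, 0 < r → WFDC (𝒴 r)) →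
      (∀ r : ℝ, 0 < r → Decomposable k r 𝒳 (𝒴 r)) → WFDC 𝒳

section Aux

variable {X : Type u} [MetricSpace X]

lemma rdisjoint_mono' {r r' : ℝ} (h : r' ≤ r) {A B : Set X} (hd : RDisjoint r A B) :
    RDisjoint r' A B := fun a ha b hb => lt_of_le_of_lt h (hd a ha b hb)

lemma isDecompOver_mono' {k : ℕ} {r r' : ℝ} (h : r' ≤ r) {Z : Set X} {𝒴 : Set (Set X)}
    (hd : IsDecompOver k r Z 𝒴) : IsDecompOver k r' Z 𝒴 := by
  obtain ⟨Zs, hZ, hC⟩ := hd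
  refine ⟨Zs, hZ, fun i => ?_⟩
  obtain ⟨𝒞, h1, h2, h3⟩ := hC i
  exact ⟨𝒞, h1, h2, fun A hA B hB hne => rdisjoint_mono' h (h3 A hA B hB hne)⟩

lemma isDecompOver_pad' {k : ℕ} {r : ℝ} {Z : Set X} {𝒴 : Set (Set X)}
    (hd : IsDecompOver k r Z 𝒴) : IsDecompOver (k + 1) r Z 𝒴 := by
  obtain ⟨Zs, hZ, hC⟩ := hd
  refine ⟨Fin.cons ∅ Zs, ?_, ?_⟩
  · rw [hZ]; ext x
    simp [mem_iUnion, Fin.exists_fin_succ]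
  · intro i
    refine Fin.cases ?_ ?_ i
    · exact ⟨∅, empty_subset _, by simp, by simp⟩
    · intro j; simpa using hC j

lemma isDecompOver_of_mem' {r : ℝ} {A : Set X} {𝒴 : Set (Set X)} (hA : A ∈ 𝒴) (k : ℕ) :
    IsDecompOver (k + 1) r A 𝒴 := by
  induction k with
  | zero =>
    refine ⟨fun _ => A, (iUnion_const A).symm, fun i => ⟨{A}, by simpa using hA, by simp, ?_⟩⟩
    intro B hB C hC hne
    simp only [mem_singleton_iff] at hB hC
    exact absurd (hB.trans hC.symm) hne
  | succ k ih => exact isDecompOver_pad' ih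

/-- Auxiliary family: all subsets admitting an `(m, r)`-decomposition over `𝒴`
(with the convention that for `m = 0` it is `𝒴` itself). -/
def Dfam (r : ℝ) (𝒴 : Set (Set X)) : ℕ → Set (Set X)
  | 0 => 𝒴
  | (m + 1) => {W : Set X | IsDecompOver (m + 1) r W 𝒴}

lemma mem_Dfam' {r : ℝ} {A : Set X} {𝒴 : Set (Set X)} (hA : A ∈ 𝒴) (m : ℕ) :
    A ∈ Dfam r 𝒴 m := by
  cases m with
  | zero => exact hA
  | succ m => exact isDecompOver_of_mem' hA m

lemma isDecompOver_split' {r : ℝ} {Z : Set X} {𝒴 : Set (Set X)} (m : ℕ)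
    (h : IsDecompOver (m + 1) r Z 𝒴) : IsDecompOver 2 r Z (Dfam r 𝒴 m) := by
  obtain ⟨Zs, hZ, hC⟩ := h
  cases m with
  | zero =>
    obtain ⟨𝒞, h1, h2, h3⟩ := hC 0
    refine ⟨![Zs 0, ∅], ?_, ?_⟩
    · rw [hZ]; ext x
      simp [mem_iUnion, Fin.exists_fin_two, Fin.exists_fin_one]
    · intro i
      refine Fin.cases ?_ ?_ i
      · exact ⟨𝒞, h1, h2, h3⟩
      · intro j
        refine ⟨∅, empty_subset _, ?_, by simp⟩
        simp [Fin.fin_one_eq_zero j]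
  | succ j =>
    obtain ⟨𝒞, h1, h2, h3⟩ := hC 0
    refine ⟨![Zs 0, ⋃ i : Fin (j + 1), Zs i.succ], ?_, ?_⟩
    · rw [hZ]; ext x
      simp [mem_iUnion, Fin.exists_fin_succ, Fin.exists_fin_two]
    · intro i
      refine Fin.cases ?_ ?_ i
      · exact ⟨𝒞, fun A hA => mem_Dfam' (h1 hA) (j + 1), h2, h3⟩
      · intro i'
        refine ⟨{⋃ i : Fin (j + 1), Zs i.succ}, ?_, ?_, ?_⟩
        · rw [singleton_subset_iff]
          exact ⟨fun i => Zs i.succ, rfl, fun i => hC i.succ⟩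
        · simp [Fin.fin_one_eq_zero i']
        · intro A hA B hB hne
          simp only [mem_singleton_iff] at hA hB
          exact absurd (hA.trans hB.symm) hne

end Aux

/-- Every metric family with weak finite decomposition complexity has
straight finite decomposition complexity. -/
theorem sfdc_of_wfdc {X : Type u} [MetricSpace X] (𝒳 : Set (Set X)) (h : WFDC 𝒳) :
    SFDC 𝒳 := by
  intro R hRpos hRmono
  suffices H : ∀ (𝒵 : Set (Set X)), WFDC 𝒵 → ∀ m : ℕ, ∃ n : ℕ, m ≤ n ∧
      ∃ Xs : ℕ → Set (Set X), Xs m = 𝒵 ∧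
        (∀ i, m ≤ i → i < n → Decomposable 2 (R i) (Xs i) (Xs (i + 1))) ∧
        UniformlyBounded (Xs n) by
    obtain ⟨n, -, Xs, h0, hstep, hb⟩ := H 𝒳 h 0
    exact ⟨n, Xs, h0, fun i hi => hstep i (Nat.zero_le i) hi, hb⟩
  intro 𝒵 h𝒵
  induction h𝒵 with
  | @ofBounded 𝒲 hb =>
    intro m
    exact ⟨m, le_rfl, fun _ => 𝒲, rfl, fun i h1 h2 => absurd h2 (by omega), hb⟩
  | @ofDecomp 𝒲 k 𝒴 hWF hDec ih =>
    intro m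
    classical
    have hr : 0 < R (m + (k + 1)) := hRpos _
    set r := R (m + (k + 1)) with hrdef
    obtain ⟨n, hn, Ys, hYs, hYstep, hYb⟩ := ih r hr (m + (k + 1))
    have hXD : ∀ Z ∈ 𝒲, IsDecompOver (k + 1) r Z (𝒴 r) :=
      fun Z hZ => isDecompOver_pad' (hDec r hr Z hZ)
    let Xs : ℕ → Set (Set X) := fun i =>
      if i ≤ m then 𝒲 else if i < m + (k + 1) then Dfam r (𝒴 r) ((k + 1) - (i - m)) else Ys i
    have hXsdef : ∀ i, Xs i =
        if i ≤ m then 𝒲 else if i < m + (k + 1) then Dfam r (𝒴 r) ((k + 1) - (i - m)) else Ys i :=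
      fun i => rfl
    refine ⟨n, by omega, Xs, by rw [hXsdef m, if_pos le_rfl], ?_, ?_⟩
    · intro i him hin
      by_cases h1 : i < m + (k + 1)
      · -- step inside the decomposition chain
        have hle : R i ≤ r := hRmono.monotone (by omega)
        have hXsi1 : Xs (i + 1) = Dfam r (𝒴 r) ((k + 1) - (i - m) - 1) := by
          rw [hXsdef (i + 1), if_neg (by omega)]
          by_cases h2 : i + 1 < m + (k + 1)
          · rw [if_pos h2]
            have e : k + 1 - (i + 1 - m) = k + 1 - (i - m) - 1 := by omega
            rw [e]
          · rw [if_neg h2]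
            have hi1 : i + 1 = m + (k + 1) := by omega
            have h0 : (k + 1) - (i - m) - 1 = 0 := by omega
            rw [hi1, hYs, h0]
            rfl
        rw [hXsi1]
        intro Z hZ
        have hmem : IsDecompOver ((k + 1) - (i - m) - 1 + 1) r Z (𝒴 r) := by
          by_cases h0 : i ≤ m
          · have him' : i = m := le_antisymm h0 him
            rw [hXsdef i, if_pos h0] at hZ
            have : (k + 1) - (i - m) - 1 + 1 = k + 1 := by omega
            rw [this]
            exact hXD Z hZ
          · rw [hXsdef i, if_neg h0, if_pos h1] at hZ
            have hj : (k + 1) - (i - m) = (k + 1) - (i - m) - 1 + 1 := by omega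
            rw [hj] at hZ
            exact hZ
        exact isDecompOver_mono' hle (isDecompOver_split' _ hmem)
      · -- step inside the chain provided by the inductive hypothesis
        have e1 : Xs i = Ys i := by
          rw [hXsdef i, if_neg (by omega), if_neg (by omega)]
        have e2 : Xs (i + 1) = Ys (i + 1) := by
          rw [hXsdef (i + 1), if_neg (by omega), if_neg (by omega)]
        rw [e1, e2]
        exact hYstep i (by omega) hin
    · have : Xs n = Ys n := by
        rw [hXsdef n, if_neg (by omega), if_neg (by omega)]
      rw [this]
      exact hYb
end

section
/- Let 𝒳 and 𝒴 be metric families over a metric space X, let k ≥ 1 and s > 0, and suppose 𝒳 is (k,s)-decomposable over 𝒴. Then there exist metric families 𝒳 = 𝒳₀, 𝒳₁, …, 𝒳ₖ over X such that 𝒳ᵢ is s-decomposable (i.e., (2,s)-decomposable) over 𝒳ᵢ₊₁ for each 0 ≤ i < k, and every member of 𝒳ₖ is either empty or a member of 𝒴. -/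
universe u

open Set

/-- If `𝒳` is `(k, s)`-decomposable over `𝒴` (`k ≥ 1`, `s > 0`), then
there is a chain of families `𝒳 = 𝒳₀, 𝒳₁, …, 𝒳ₖ` with `𝒳ᵢ` `(2, s)`-decomposable over
`𝒳ᵢ₊₁` for each `i < k`, and every member of `𝒳ₖ` empty or a member of `𝒴`. -/
theorem chain_of_kfold_decomposition {X : Type u} [MetricSpace X]
    (𝒳 𝒴 : Set (Set X)) (k : ℕ) (hk : 1 ≤ k) (s : ℝ) (hs : 0 < s)
    (h : Decomposable k s 𝒳 𝒴) :
    ∃ Xs : ℕ → Set (Set X), Xs 0 = 𝒳 ∧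
      (∀ i < k, Decomposable 2 s (Xs i) (Xs (i + 1))) ∧
      ∀ Z ∈ Xs k, Z = ∅ ∨ Z ∈ 𝒴 := by
  classical
  simp only [Decomposable, IsDecompOver] at h
  choose Zs hZeq 𝒞 h𝒞sub h𝒞eq h𝒞disj using h
  set T : (Z : Set X) → Z ∈ 𝒳 → ℕ → Set X :=
    fun Z hZ i => ⋃ j : Fin k, if i ≤ j.val then Zs Z hZ j else ∅ with hT
  have hT0 : ∀ Z (hZ : Z ∈ 𝒳), T Z hZ 0 = Z := by
    intro Z hZ
    simp [hT, hZeq Z hZ]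
  have hTk : ∀ Z (hZ : Z ∈ 𝒳), T Z hZ k = ∅ := by
    intro Z hZ
    simp only [hT]
    apply Set.iUnion_eq_empty.2
    intro j
    rw [if_neg]
    exact Nat.not_le_of_lt j.isLt
  have hTsplit : ∀ Z (hZ : Z ∈ 𝒳) (i : ℕ) (hik : i < k),
      T Z hZ i = Zs Z hZ ⟨i, hik⟩ ∪ T Z hZ (i + 1) := by
    intro Z hZ i hik
    simp only [hT]
    ext x
    simp only [Set.mem_iUnion, Set.mem_union]
    constructor
    · rintro ⟨j, hj⟩
      by_cases hji : j = ⟨i, hik⟩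
      · subst hji
        rw [if_pos le_rfl] at hj
        exact Or.inl hj
      · split_ifs at hj with hle
        · have : i + 1 ≤ j.val := by
            rcases lt_or_eq_of_le hle with h' | h'
            · exact h'
            · exact absurd (Fin.ext h'.symm) hji
          exact Or.inr ⟨j, by rwa [if_pos this]⟩
        · exact absurd hj (Set.notMem_empty x)
    · rintro (hx | ⟨j, hj⟩)
      · exact ⟨⟨i, hik⟩, by rwa [if_pos le_rfl]⟩
      · split_ifs at hj with hle
        · exact ⟨j, by rwa [if_pos (Nat.le_of_succ_le hle)]⟩
        · exact absurd hj (Set.notMem_empty x)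
  set Xs : ℕ → Set (Set X) := fun i =>
    if i = 0 then 𝒳 else 𝒴 ∪ {S | ∃ Z, ∃ hZ : Z ∈ 𝒳, S = T Z hZ i} with hXs
  have hXs0 : Xs 0 = 𝒳 := by simp [hXs]
  have hXsucc : ∀ i : ℕ, Xs (i + 1) = 𝒴 ∪ {S | ∃ Z, ∃ hZ : Z ∈ 𝒳, S = T Z hZ (i + 1)} := by
    intro i; simp [hXs]
  -- generic decomposition of a tail
  have tailDecomp : ∀ (i : ℕ) (hik : i < k) (Z : Set X) (hZ : Z ∈ 𝒳),
      IsDecompOver 2 s (T Z hZ i) (Xs (i + 1)) := by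
    intro i hik Z hZ
    refine ⟨![Zs Z hZ ⟨i, hik⟩, T Z hZ (i + 1)], ?_, ?_⟩
    · rw [hTsplit Z hZ i hik]
      ext x
      simp [Fin.exists_fin_two]
    · intro j
      fin_cases j
      · refine ⟨𝒞 Z hZ ⟨i, hik⟩, ?_, ?_, ?_⟩
        · intro A hA
          rw [hXsucc]
          exact Or.inl (h𝒞sub Z hZ ⟨i, hik⟩ hA)
        · simpa using h𝒞eq Z hZ ⟨i, hik⟩
        · exact h𝒞disj Z hZ ⟨i, hik⟩
      · refine ⟨{T Z hZ (i + 1)}, ?_, by simp, ?_⟩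
        · intro A hA
          rw [Set.mem_singleton_iff] at hA
          rw [hXsucc]
          exact Or.inr ⟨Z, hZ, hA⟩
        · intro A hA B hB hAB
          rw [Set.mem_singleton_iff] at hA hB
          exact absurd (hA.trans hB.symm) hAB
  refine ⟨Xs, hXs0, ?_, ?_⟩
  · intro i hik W hW
    rcases Nat.eq_zero_or_pos i with rfl | hi
    · rw [hXs0] at hW
      rw [← hT0 W hW]
      exact tailDecomp 0 hik W hW
    · replace hW : W ∈ 𝒴 ∪ {S | ∃ Z, ∃ hZ : Z ∈ 𝒳, S = T Z hZ i} := by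
        simpa [hXs, Nat.pos_iff_ne_zero.mp hi] using hW
      rcases hW with hW | ⟨Z, hZ, rfl⟩
      · -- W ∈ 𝒴 : trivial decomposition
        refine ⟨![W, ∅], by ext x; simp [Fin.exists_fin_two], ?_⟩
        intro j
        fin_cases j
        · refine ⟨{W}, ?_, by simp, ?_⟩
          · intro A hA
            rw [Set.mem_singleton_iff] at hA
            rw [hXsucc]
            exact Or.inl (hA ▸ hW)
          · intro A hA B hB hAB
            rw [Set.mem_singleton_iff] at hA hB
            exact absurd (hA.trans hB.symm) hAB
        · exact ⟨∅, by simp, by simp, by simp⟩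
      · exact tailDecomp i hik Z hZ
  · intro Z hZ
    replace hZ : Z ∈ 𝒴 ∪ {S | ∃ W, ∃ hW : W ∈ 𝒳, S = T W hW k} := by
      simpa [hXs, Nat.pos_iff_ne_zero.mp hk] using hZ
    rcases hZ with hZ | ⟨W, hW, rfl⟩
    · exact Or.inr hZ
    · exact Or.inl (hTk W hW)
end

section
/- If a metric space X has straight finite decomposition complexity and there exists a coarse embedding f : Y → X from a metric space Y, then Y has straight finite decomposition complexity. -/
universe u

open Set

/-- A coarse embedding between metric spaces. -/
def IsCoarseEmbedding {Y X : Type*} [MetricSpace Y] [MetricSpace X] (f : Y → X) : Prop :=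
  ∃ ρminus ρplus : ℝ → ℝ, Monotone ρminus ∧ Monotone ρplus ∧
    Filter.Tendsto ρminus Filter.atTop Filter.atTop ∧
    ∀ y y' : Y, ρminus (dist y y') ≤ dist (f y) (f y') ∧
      dist (f y) (f y') ≤ ρplus (dist y y')

/-- If `X` has straight finite decomposition complexity and there is a
coarse embedding `f : Y → X`, then `Y` has straight finite decomposition complexity. -/
theorem sfdc_coarse_inheritance {X Y : Type u} [MetricSpace X] [MetricSpace Y]
    (hX : SFDC ({(Set.univ : Set X)} : Set (Set X)))
    (f : Y → X) (hf : IsCoarseEmbedding f) :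
    SFDC ({(Set.univ : Set Y)} : Set (Set Y)) := by
  obtain ⟨ρm, ρp, hρm, hρp, hlim, hbnd⟩ := hf
  intro R hRpos hRmono
  set S : ℕ → ℝ := fun i => max (ρp (R i)) 0 + R i with hSdef
  have hSpos : ∀ i, 0 < S i := fun i =>
    add_pos_of_nonneg_of_pos (le_max_right _ _) (hRpos i)
  have hSmono : StrictMono S := fun a b hab =>
    add_lt_add_of_le_of_lt (max_le_max (hρp (hRmono hab).le) le_rfl) (hRmono hab)
  obtain ⟨n, Xs, hXs0, hdec, C, hC⟩ := hX S hSpos hSmono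
  refine ⟨n, fun i => (fun Z => f ⁻¹' Z) '' Xs i, ?_, ?_, ?_⟩
  · simp [hXs0]
  · intro i hi W hW
    obtain ⟨Z, hZ, rfl⟩ := hW
    obtain ⟨Zs, hZeq, hZs⟩ := hdec i hi Z hZ
    refine ⟨fun j => f ⁻¹' Zs j, by rw [hZeq]; exact Set.preimage_iUnion, ?_⟩
    intro j
    obtain ⟨𝒞, h𝒞sub, h𝒞eq, h𝒞disj⟩ := hZs j
    refine ⟨(fun A => f ⁻¹' A) '' 𝒞, Set.image_mono h𝒞sub, ?_, ?_⟩
    · show f ⁻¹' Zs j = _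
      rw [h𝒞eq]
      simp [Set.sUnion_image, Set.preimage_sUnion]
    · rintro A' ⟨A, hA, rfl⟩ B' ⟨B, hB, rfl⟩ hne
      have hABne : A ≠ B := fun h => hne (by rw [h])
      intro y hy y' hy'
      have h1 : S i < dist (f y) (f y') := h𝒞disj A hA B hB hABne _ hy _ hy'
      by_contra hle
      push_neg at hle
      have h2 : dist (f y) (f y') ≤ ρp (R i) := (hbnd y y').2.trans (hρp hle)
      have h3 : ρp (R i) ≤ max (ρp (R i)) 0 := le_max_left _ _
      have h4 : 0 < R i := hRpos i
      simp only [hSdef] at h1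
      linarith
  · obtain ⟨D, hD⟩ := Filter.eventually_atTop.mp
      (hlim.eventually (Filter.eventually_gt_atTop C))
    refine ⟨D, ?_⟩
    rintro W ⟨Z, hZ, rfl⟩ y hy y' hy'
    by_contra hgt
    push_neg at hgt
    have h1 : C < ρm (dist y y') := hD _ hgt.le
    have h2 : ρm (dist y y') ≤ dist (f y) (f y') := (hbnd y y').1
    have h3 : dist (f y) (f y') ≤ C := hC Z hZ _ hy _ hy'
    linarith
end

section
/- Let f : E → B be a map of metric spaces that is uniformly expansive with nondecreasing control function ρ, let r > 0, and let Z be a subset of B admitting a (k, ρ(r))-decomposition over a metric family 𝒴 over B. Then f⁻¹(Z) admits a (k,r)-decomposition over the metric family f⁻¹(𝒴) = {f⁻¹(Y) : Y ∈ 𝒴} over E. In particular, if A₁, A₂ ⊆ B are ρ(r)-disjoint, then f⁻¹(A₁) and f⁻¹(A₂) are r-disjoint in E. -/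
universe u

open Set

/-- If `f : E → B` is uniformly expansive with nondecreasing control
function `ρ`, `r > 0`, and `Z ⊆ B` admits a `(k, ρ(r))`-decomposition over a family `𝒴`,
then `f⁻¹(Z)` admits a `(k, r)`-decomposition over the family of preimages
`f⁻¹(𝒴) = {f⁻¹(Y) : Y ∈ 𝒴}`; in particular preimages of `ρ(r)`-disjoint sets are
`r`-disjoint. -/
theorem preimage_decomposition {E B : Type u} [MetricSpace E] [MetricSpace B]
    (f : E → B) (ρ : ℝ → ℝ) (hρ : Monotone ρ)
    (hf : ∀ x x' : E, dist (f x) (f x') ≤ ρ (dist x x'))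
    (r : ℝ) (hr : 0 < r) (k : ℕ) (Z : Set B) (𝒴 : Set (Set B))
    (hZ : IsDecompOver k (ρ r) Z 𝒴) :
    IsDecompOver k r (f ⁻¹' Z) ((fun Y => f ⁻¹' Y) '' 𝒴) ∧
      ∀ A₁ A₂ : Set B, RDisjoint (ρ r) A₁ A₂ →
        RDisjoint r (f ⁻¹' A₁) (f ⁻¹' A₂) := by
  have key : ∀ A₁ A₂ : Set B, RDisjoint (ρ r) A₁ A₂ →
      RDisjoint r (f ⁻¹' A₁) (f ⁻¹' A₂) := by
    intro A₁ A₂ h a ha b hb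
    by_contra hle
    push_neg at hle
    exact absurd (le_trans (hf a b) (hρ hle)) (not_le.2 (h _ ha _ hb))
  refine ⟨?_, key⟩
  obtain ⟨Zs, hZe, hZs⟩ := hZ
  refine ⟨fun i => f ⁻¹' Zs i, by rw [hZe]; ext x; simp, fun i => ?_⟩
  obtain ⟨𝒞, h𝒞Y, h𝒞u, h𝒞d⟩ := hZs i
  refine ⟨(fun Y => f ⁻¹' Y) '' 𝒞, image_mono h𝒞Y, ?_, ?_⟩
  · simp only []; rw [h𝒞u]; ext x; simp [mem_sUnion]
  · rintro _ ⟨A, hA, rfl⟩ _ ⟨C, hC, rfl⟩ hne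
    exact key A C (h𝒞d A hA C hC (fun h => hne (by rw [h])))
end

section
/- If a metric family 𝒳 over a metric space X has straight finite decomposition complexity, then its subspace closure 𝒳' also has straight finite decomposition complexity. -/
universe u

open Set

/-- The subspace closure of a metric family: all subsets of members of the family. -/
def SubspaceClosure {X : Type u} [MetricSpace X] (𝒳 : Set (Set X)) : Set (Set X) :=
  {Z : Set X | ∃ Y ∈ 𝒳, Z ⊆ Y}

lemma isDecompOver_subset {X : Type u} [MetricSpace X] {k : ℕ} {r : ℝ} {Z Z' : Set X}
    {𝒴 : Set (Set X)} (hd : IsDecompOver k r Z 𝒴) (hsub : Z' ⊆ Z) :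
    IsDecompOver k r Z' (SubspaceClosure 𝒴) := by
  obtain ⟨Zs, hZ, hcol⟩ := hd
  refine ⟨fun i => Zs i ∩ Z', ?_, ?_⟩
  · apply Set.eq_of_subset_of_subset
    · intro x hx
      have : x ∈ ⋃ i, Zs i := hZ ▸ hsub hx
      obtain ⟨s, ⟨i, rfl⟩, hxs⟩ := this
      exact Set.mem_iUnion.2 ⟨i, hxs, hx⟩
    · intro x hx
      obtain ⟨s, ⟨i, rfl⟩, hxs⟩ := hx
      exact hxs.2
  · intro i
    obtain ⟨𝒞, h𝒞sub, h𝒞eq, h𝒞dis⟩ := hcol i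
    refine ⟨(· ∩ Z') '' 𝒞, ?_, ?_, ?_⟩
    · rintro _ ⟨A, hA, rfl⟩
      exact ⟨A, h𝒞sub hA, Set.inter_subset_left⟩
    · show Zs i ∩ Z' = _
      rw [h𝒞eq]
      ext x
      simp only [Set.mem_inter_iff, Set.mem_sUnion, Set.mem_image]
      constructor
      · rintro ⟨⟨A, hA, hxA⟩, hx'⟩
        exact ⟨A ∩ Z', ⟨A, hA, rfl⟩, hxA, hx'⟩
      · rintro ⟨_, ⟨A, hA, rfl⟩, hxA, hx'⟩
        exact ⟨⟨A, hA, hxA⟩, hx'⟩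
    · rintro _ ⟨A, hA, rfl⟩ _ ⟨B, hB, rfl⟩ hne a ha b hb
      have hAB : A ≠ B := by rintro rfl; exact hne rfl
      exact h𝒞dis A hA B hB hAB a ha.1 b hb.1

/-- If a metric family has straight finite decomposition complexity,
then so does its subspace closure. -/
theorem sfdc_subspaceClosure {X : Type u} [MetricSpace X] (𝒳 : Set (Set X))
    (h : SFDC 𝒳) : SFDC (SubspaceClosure 𝒳) := by
  intro R hR hmono
  obtain ⟨n, Xs, hXs0, hdec, hbd⟩ := h R hR hmono
  refine ⟨n, fun i => SubspaceClosure (Xs i), by show SubspaceClosure (Xs 0) = _; rw [hXs0], ?_, ?_⟩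
  · intro i hi Z hZ
    obtain ⟨Y, hY, hZY⟩ := hZ
    exact isDecompOver_subset (hdec i hi Y hY) hZY
  · obtain ⟨C, hC⟩ := hbd
    exact ⟨C, fun Z ⟨Y, hY, hZY⟩ x hx y hy => hC Y hY x (hZY hx) y (hZY hy)⟩
end
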